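/- arXiv:2501.01754 — 2 statements merged into one kernel-verified Lean document; each statement's English description precedes it below -/
import Mathlib

section
/- Let G be a group acting without edge inversions on a simplicial tree T, and let N be a normal subgroup of G. Then the quotient graph T/N is a tree if and only if N is generated by an equivariant family of subgroups {R_v} of G, i.e. N = ⟨R_v⟩. -/
/-!
If `T/N` is a tree, take `n ∈ N` and a walk in `T` from `v` to `n • v`. Its image in `T/N` is a
closed walk, so it backtracks somewhere; the last two conditions of `QuotIsTree` lift the
backtrack to an element of `N` fixing the turning vertex, and folding the walk by it shortens
the walk. By induction `n` is a product of elements of `N` that fix vertices, so `N` is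
generated by the equivariant family `v ↦ N ⊓ Stab(v)` (equivariant since `N` is normal).

Conversely, let `N` be generated by elements fixing vertices and let `S` be an `N`-invariant set
of edges. Every closed walk in the tree `T` crosses `S` an even number of times, hence so does
every walk from `x` to `g • x` when `g ∈ N` fixes a vertex, hence when `g` is any element of
`N`. Taking for `S` the `N`-orbit of a single edge, a loop or a cycle in `T/N`, or two
`N`-inequivalent edges with a common image, lifts to a walk between `N`-equivalent vertices
crossing `S` an odd number of times.
-/

open SimpleGraph

section TreePrelude

variable {V W : Type*} {G H : Type*}

/-- The action of `G` on the vertices preserves adjacency, i.e. `G` acts on the graph `T`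
by graph automorphisms. -/
def IsGraphAction (G : Type*) [Group G] [MulAction G V] (T : SimpleGraph V) : Prop :=
  ∀ (g : G) (u v : V), T.Adj u v ↔ T.Adj (g • u) (g • v)

/-- The action of `G` on the graph `T` has no edge inversions. -/
def NoEdgeInversions (G : Type*) [Group G] [MulAction G V] (T : SimpleGraph V) : Prop :=
  ∀ (g : G) (u v : V), T.Adj u v → ¬(g • u = v ∧ g • v = u)

/-- An equivariant family of subgroups for an action of `G` on (the vertex set of) a tree:
a subgroup `R v` of the stabilizer of each vertex `v`, with `g (R v) g⁻¹ = R (g • v)`. -/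
structure EquivariantFamily (G : Type*) [Group G] (V : Type*) [MulAction G V] where
  R : V → Subgroup G
  le_stab : ∀ v : V, R v ≤ MulAction.stabilizer G v
  equivariant : ∀ (g : G) (v : V) (x : G), x ∈ R v → g * x * g⁻¹ ∈ R (g • v)

/-- Vertex set of the quotient graph `T/N`: the `N`-orbits of vertices. -/
abbrev OrbQ (G : Type*) [Group G] (N : Subgroup G) (V : Type*) [MulAction G V] :=
  Quotient (MulAction.orbitRel N V)

/-- The class of a vertex in the quotient `T/N`. -/
def vmk [Group G] [MulAction G V] (N : Subgroup G) (v : V) : OrbQ G N V :=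
  Quotient.mk (MulAction.orbitRel N V) v

/-- The quotient graph `T/N` (as a simple graph on the set of `N`-orbits of vertices). -/
def quotientGraph [Group G] [MulAction G V] (T : SimpleGraph V) (N : Subgroup G) :
    SimpleGraph (OrbQ G N V) where
  Adj x y := x ≠ y ∧ ∃ u v : V, vmk N u = x ∧ vmk N v = y ∧ T.Adj u v
  symm := by
    constructor
    rintro x y ⟨hxy, u, v, hu, hv, huv⟩
    exact ⟨hxy.symm, v, u, hv, hu, huv.symm⟩
  loopless := by
    constructor
    rintro x ⟨h, -⟩
    exact h rfl

/-- The quotient graph `T/N`, regarded as a graph possibly with loops and multiple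
edges, is a tree: the underlying simple graph is a tree, no edge of `T` descends to
a loop, and no two `N`-inequivalent edges descend to parallel edges. -/
def QuotIsTree [Group G] [MulAction G V] (T : SimpleGraph V) (N : Subgroup G) : Prop :=
  (quotientGraph T N).IsTree ∧
  (∀ u v : V, T.Adj u v → vmk N u ≠ vmk N v) ∧
  (∀ u v u' v' : V, T.Adj u v → T.Adj u' v' → vmk N u = vmk N u' → vmk N v = vmk N v' →
    ∃ n : G, n ∈ N ∧ n • u = u' ∧ n • v = v')

/-- The action of the quotient group `G/N` on the `N`-orbits of vertices. -/
def qsmul [Group G] [MulAction G V] (N : Subgroup G) [N.Normal] (gbar : G ⧸ N)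
    (x : OrbQ G N V) : OrbQ G N V :=
  Quotient.liftOn₂ gbar x (fun g v => vmk N (g • v)) (by
    intro g₁ v₁ g₂ v₂ hg hv
    have hg' : g₁⁻¹ * g₂ ∈ N := (QuotientGroup.leftRel_apply).mp hg
    obtain ⟨n, hn⟩ := MulAction.orbitRel_apply.mp hv
    apply Quotient.sound
    refine MulAction.orbitRel_apply.mpr ?_
    refine ⟨⟨g₁ * (n : G) * (g₁⁻¹ * g₂)⁻¹ * g₁⁻¹, ?_⟩, ?_⟩
    · have : g₁ * ((n : G) * (g₁⁻¹ * g₂)⁻¹) * g₁⁻¹ ∈ N :=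
        Subgroup.Normal.conj_mem ‹N.Normal› _ (N.mul_mem n.2 (N.inv_mem hg')) g₁
      simpa [mul_assoc] using this
    · show (g₁ * (n : G) * (g₁⁻¹ * g₂)⁻¹ * g₁⁻¹) • (g₂ • v₂) = g₁ • v₁
      rw [← hn]
      show (g₁ * (n : G) * (g₁⁻¹ * g₂)⁻¹ * g₁⁻¹) • (g₂ • v₂) = g₁ • (n : G) • v₂
      rw [smul_smul, smul_smul]
      congr 1
      group)

/-- Acylindricity for an action on (the vertex set of) a simplicial graph, with respect to
the combinatorial metric: for every `ε` there are `R, C > 0` such that any two points at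
distance at least `R` are simultaneously `ε`-coarsely stabilized by at most `C` elements. -/
def AcylTree {W H : Type*} (Q : SimpleGraph W) (act : H → W → W) : Prop :=
  ∀ ε : ℕ, ∃ R C : ℕ, 0 < R ∧ 0 < C ∧ ∀ x y : W, R ≤ Q.dist x y →
    {h : H | Q.dist x (act h x) ≤ ε ∧ Q.dist y (act h y) ≤ ε}.Finite ∧
    Nat.card {h : H | Q.dist x (act h x) ≤ ε ∧ Q.dist y (act h y) ≤ ε} ≤ C

/-- `(k,C)`-acylindricity: the pointwise stabilizer of every edge path of length at least
`k` has at most `C` elements. -/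
def KCAcylOn {W H : Type*} (Q : SimpleGraph W) (act : H → W → W) (k C : ℕ) : Prop :=
  ∀ (x y : W) (p : Q.Walk x y), k ≤ p.length →
    {h : H | ∀ w ∈ p.support, act h w = w}.Finite ∧
    Nat.card {h : H | ∀ w ∈ p.support, act h w = w} ≤ C

/-- An element is elliptic for an action on a tree if it fixes a vertex. -/
def EllipticOn {W H : Type*} (act : H → W → W) (h : H) : Prop := ∃ x : W, act h x = x

/-- An element is hyperbolic for an action on a tree if it fixes no vertex. -/
def HyperbolicOn {W H : Type*} (act : H → W → W) (h : H) : Prop := ∀ x : W, act h x ≠ x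

/-- The translation length of `h`. -/
noncomputable def translationLength {W H : Type*} (Q : SimpleGraph W) (act : H → W → W)
    (h : H) : ℕ :=
  sInf (Set.range fun x : W => Q.dist x (act h x))

/-- The axis (minimizing set) of `h`. -/
def axisOf {W H : Type*} (Q : SimpleGraph W) (act : H → W → W) (h : H) : Set W :=
  {x : W | Q.dist x (act h x) = translationLength Q act h}

/-- Two hyperbolic isometries of a simplicial tree are independent if their axes overlap
in a finite (equivalently, bounded) set. -/
def IndependentOn {W H : Type*} (Q : SimpleGraph W) (act : H → W → W) (g h : H) : Prop :=
  (axisOf Q act g ∩ axisOf Q act h).Finite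

/-- A tree action is non-elementary if there are infinitely many pairwise independent
hyperbolic elements. -/
def NonElemTree {W H : Type*} (Q : SimpleGraph W) (act : H → W → W) : Prop :=
  ∃ f : ℕ → H, Function.Injective f ∧ (∀ i, HyperbolicOn act (f i)) ∧
    ∀ i j, i ≠ j → IndependentOn Q act (f i) (f j)

/-- The WPD condition for an element `h` of a group acting on a graph. -/
def IsWPDElt {W H : Type*} [Group H] (Q : SimpleGraph W) (act : H → W → W) (h : H) : Prop :=
  ∀ (s : W) (ε : ℕ), ∃ M : ℕ,
    {g : H | Q.dist s (act g s) ≤ ε ∧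
      Q.dist (act (h ^ M) s) (act g (act (h ^ M) s)) ≤ ε}.Finite

/-- A non-elementary WPD action: two independent hyperbolic WPD elements. -/
def NonElemWPD {W H : Type*} [Group H] (Q : SimpleGraph W) (act : H → W → W) : Prop :=
  ∃ g h : H, HyperbolicOn act g ∧ HyperbolicOn act h ∧ IndependentOn Q act g h ∧
    IsWPDElt Q act g ∧ IsWPDElt Q act h

end TreePrelude

namespace SimpleGraph

variable {V : Type*} {G : SimpleGraph V}

theorem IsAcyclic.exists_getVert_eq_getVert_add_two (hG : G.IsAcyclic) {u v : V}
    {p : G.Walk u v} (hp : ¬p.IsPath) :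
    ∃ i, i + 2 ≤ p.length ∧ p.getVert i = p.getVert (i + 2) := by
  rw [hG.isPath_iff_isChain] at hp
  obtain ⟨i, hi, hrep⟩ := List.exists_not_getElem_of_not_isChain hp
  rw [Walk.length_edges] at hi
  refine ⟨i, hi, ?_⟩
  rw [not_ne_iff, Walk.getElem_edges, Walk.getElem_edges, Sym2.eq_iff] at hrep
  rcases hrep with ⟨h, -⟩ | ⟨h, -⟩
  · exact absurd h (p.adj_getVert_succ (by omega)).ne
  · exact h

theorem IsAcyclic.even_countP_edges (hG : G.IsAcyclic) (S : Set (Sym2 V))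
    [DecidablePred (· ∈ S)] {u : V} (p : G.Walk u u) :
    Even (p.edges.countP (· ∈ S)) := by
  induction hn : p.length using Nat.strong_induction_on generalizing u with
  | _ n ih =>
  by_cases hnil : p.Nil
  · simp [hnil.eq_nil]
  -- a closed walk in a forest backtracks; removing the backtrack drops two copies of one edge
  obtain ⟨i, hi, hback⟩ :=
    hG.exists_getVert_eq_getVert_add_two (mt Walk.isPath_iff_nil.mp hnil)
  have hlen : i + 1 < p.edges.length := by rw [Walk.length_edges]; omega
  have hsplit :
      p.edges = p.edges.take i ++ p.edges[i] :: p.edges[i + 1] :: p.edges.drop (i + 2) := by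
    rw [← List.drop_eq_getElem_cons, ← List.drop_eq_getElem_cons, List.take_append_drop]
  have hdouble : p.edges[i] = p.edges[i + 1] := by
    rw [Walk.getElem_edges, Walk.getElem_edges, hback, Sym2.eq_swap]
  have hshort := ih _ (by
      simp only [Walk.length_append, Walk.take_length, Walk.length_copy, Walk.drop_length]
      omega)
    ((p.take i).append ((p.drop (i + 2)).copy hback.symm rfl)) rfl
  rw [hsplit, hdouble]
  simp only [Walk.edges_append, Walk.edges_take, Walk.edges_copy, Walk.edges_drop,
    List.countP_append, List.countP_cons] at hshort ⊢
  split_ifs <;> simp only [Nat.even_add, Nat.even_add_one, add_zero] at hshort ⊢ <;> tauto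

theorem IsAcyclic.even_countP_edges_iff (hG : G.IsAcyclic) (S : Set (Sym2 V))
    [DecidablePred (· ∈ S)] {u v : V} (p q : G.Walk u v) :
    Even (p.edges.countP (· ∈ S)) ↔ Even (q.edges.countP (· ∈ S)) := by
  have := hG.even_countP_edges S (p.append q.reverse)
  rwa [Walk.edges_append, Walk.edges_reverse, List.countP_append, List.countP_reverse,
    Nat.even_add] at this

theorem IsTree.even_countP_edges_of_isFixedPt (hG : G.IsTree) (f : G →g G) (S : Set (Sym2 V))
    [DecidablePred (· ∈ S)] (hS : ∀ e, e.map f ∈ S ↔ e ∈ S) {v : V}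
    (hv : Function.IsFixedPt f v) {x : V} (p : G.Walk x (f x)) :
    Even (p.edges.countP (· ∈ S)) := by
  obtain ⟨q⟩ := hG.connected.preconnected v x
  have hq : (q.map f).edges.countP (· ∈ S) = q.edges.countP (· ∈ S) := by
    simp only [Walk.edges_map, List.countP_map, Function.comp_def, hS]
  have := hG.isAcyclic.even_countP_edges_iff S (q.append p) ((q.map f).copy hv.eq rfl)
  rw [Walk.edges_append, List.countP_append, Walk.edges_copy, hq, Nat.even_add] at this
  tauto

end SimpleGraph

open SimpleGraph MulAction

section QuotientTree

variable {V G : Type*} [Group G] [MulAction G V] {T : SimpleGraph V} {N : Subgroup G}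

@[simps]
def IsGraphAction.hom (hact : IsGraphAction G T) (g : G) : T →g T where
  toFun := (g • ·)
  map_rel' := (hact g _ _).mp

theorem vmk_smul {n : G} (hn : n ∈ N) (x : V) : vmk N (n • x) = vmk N x :=
  Quotient.sound (mem_orbit_iff.mpr ⟨⟨n, hn⟩, rfl⟩)

theorem vmk_eq_vmk_iff {u v : V} : vmk N u = vmk N v ↔ ∃ n ∈ N, n • v = u := by
  rw [vmk, vmk, Quotient.eq, orbitRel_apply, mem_orbit_iff]
  exact ⟨fun ⟨n, hn⟩ => ⟨n, n.2, hn⟩, fun ⟨n, hn, hnv⟩ => ⟨⟨n, hn⟩, hnv⟩⟩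

def edgeOrbit (N : Subgroup G) (e₀ : Sym2 V) : Set (Sym2 V) :=
  {e | ∃ n ∈ N, e₀.map (n • ·) = e}

theorem self_mem_edgeOrbit (e₀ : Sym2 V) : e₀ ∈ edgeOrbit N e₀ :=
  ⟨1, one_mem N, by simp⟩

theorem map_mem_edgeOrbit {e₀ e : Sym2 V} {g : G} (hg : g ∈ N) (he : e ∈ edgeOrbit N e₀) :
    e.map (g • ·) ∈ edgeOrbit N e₀ := by
  obtain ⟨n, hn, rfl⟩ := he
  exact ⟨g * n, mul_mem hg hn, by simp [Sym2.map_map, mul_smul]⟩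

theorem map_mem_edgeOrbit_iff {e₀ : Sym2 V} {g : G} (hg : g ∈ N) (e : Sym2 V) :
    e.map (g • ·) ∈ edgeOrbit N e₀ ↔ e ∈ edgeOrbit N e₀ := by
  refine ⟨fun he => ?_, map_mem_edgeOrbit hg⟩
  simpa [Sym2.map_map, Function.comp_def] using map_mem_edgeOrbit (inv_mem hg) he

theorem map_vmk_of_mem_edgeOrbit {e₀ e : Sym2 V} (he : e ∈ edgeOrbit N e₀) :
    e.map (vmk N) = e₀.map (vmk N) := by
  obtain ⟨n, hn, rfl⟩ := he
  simp [Sym2.map_map, vmk_smul hn]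

theorem even_countP_edges_of_mem_iSup (hT : T.IsTree) (hact : IsGraphAction G T)
    (S : Set (Sym2 V)) [DecidablePred (· ∈ S)]
    (hS : ∀ g ∈ N, ∀ e, e.map (g • ·) ∈ S ↔ e ∈ S)
    {n : G} (hn : n ∈ ⨆ v : V, N ⊓ stabilizer G v) {x : V} (p : T.Walk x (n • x)) :
    Even (p.edges.countP (· ∈ S)) := by
  induction hn using Subgroup.iSup_induction' generalizing x with
  | hp v g hg =>
    exact hT.even_countP_edges_of_isFixedPt (hact.hom g) S (hS g hg.1) (v := v) hg.2 p
  | h1 => simpa using hT.isAcyclic.even_countP_edges S (p.copy rfl (one_smul G x))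
  | hmul g h _ _ hg hh =>
    obtain ⟨q⟩ := hT.connected.preconnected x (h • x)
    obtain ⟨r⟩ := hT.connected.preconnected (h • x) (g • h • x)
    rw [hT.isAcyclic.even_countP_edges_iff S p ((q.append r).copy rfl (mul_smul g h x).symm),
      Walk.edges_copy, Walk.edges_append, List.countP_append]
    exact (hh q).add (hg r)

theorem even_countP_edges_of_vmk_eq (hT : T.IsTree) (hact : IsGraphAction G T)
    (hgen : N ≤ ⨆ v : V, N ⊓ stabilizer G v)
    (S : Set (Sym2 V)) [DecidablePred (· ∈ S)]
    (hS : ∀ g ∈ N, ∀ e, e.map (g • ·) ∈ S ↔ e ∈ S)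
    {a b : V} (p : T.Walk a b) (hab : vmk N a = vmk N b) :
    Even (p.edges.countP (· ∈ S)) := by
  obtain ⟨n, hn, rfl⟩ := vmk_eq_vmk_iff.mp hab.symm
  exact even_countP_edges_of_mem_iSup hT hact S hS (hgen hn) p

theorem vmk_ne_vmk_of_adj (hT : T.IsTree) (hact : IsGraphAction G T)
    (hgen : N ≤ ⨆ v : V, N ⊓ stabilizer G v) {u v : V} (huv : T.Adj u v) :
    vmk N u ≠ vmk N v := by
  classical
  intro heq
  have := even_countP_edges_of_vmk_eq hT hact hgen (edgeOrbit N s(u, v))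
    (fun _ hg => map_mem_edgeOrbit_iff hg) huv.toWalk heq
  simp [self_mem_edgeOrbit] at this

theorem exists_mem_smul_eq_of_adj_of_adj (hT : T.IsTree) (hact : IsGraphAction G T)
    (hgen : N ≤ ⨆ v : V, N ⊓ stabilizer G v) {w a b : V} (hwa : T.Adj w a) (hwb : T.Adj w b)
    (hab : vmk N a = vmk N b) : ∃ m ∈ N, m • w = w ∧ m • a = b := by
  classical
  have heven := even_countP_edges_of_vmk_eq hT hact hgen (edgeOrbit N s(a, w))
    (fun _ hg => map_mem_edgeOrbit_iff hg) (.cons hwa.symm hwb.toWalk) hab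
  have hwb_mem : s(w, b) ∈ edgeOrbit N s(a, w) := by
    by_contra h
    simp [self_mem_edgeOrbit, h] at heven
  obtain ⟨m, hm, hmap⟩ := hwb_mem
  rw [Sym2.map_mk, Sym2.eq_iff] at hmap
  rcases hmap with ⟨hma, -⟩ | ⟨hma, hmw⟩
  · exact absurd (hma ▸ vmk_smul hm a) (vmk_ne_vmk_of_adj hT hact hgen hwa)
  · exact ⟨m, hm, hmw, hma⟩

theorem exists_mem_smul_eq_smul_eq_of_adj (hT : T.IsTree) (hact : IsGraphAction G T)
    (hgen : N ≤ ⨆ v : V, N ⊓ stabilizer G v) {u v u' v' : V} (huv : T.Adj u v)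
    (hu'v' : T.Adj u' v') (hu : vmk N u = vmk N u') (hv : vmk N v = vmk N v') :
    ∃ n ∈ N, n • u = u' ∧ n • v = v' := by
  obtain ⟨n, hn, rfl⟩ := vmk_eq_vmk_iff.mp hu.symm
  obtain ⟨m, hm, hmu, hmv⟩ := exists_mem_smul_eq_of_adj_of_adj hT hact hgen
    ((hact n u v).mp huv) hu'v' ((vmk_smul hn v).trans hv)
  exact ⟨m * n, mul_mem hm hn, by rw [mul_smul, hmu], by rw [mul_smul, hmv]⟩

theorem exists_walk_lift (hact : IsGraphAction G T) {α β : OrbQ G N V}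
    (c : (quotientGraph T N).Walk α β) {a : V} (ha : vmk N a = α) :
    ∃ b, ∃ p : T.Walk a b, vmk N b = β ∧ p.edges.map (Sym2.map (vmk N)) = c.edges := by
  induction c generalizing a with
  | nil => exact ⟨a, .nil, ha, rfl⟩
  | cons hadj c ih =>
    obtain ⟨-, u, v, rfl, rfl, huv⟩ := hadj
    obtain ⟨n, hn, rfl⟩ := vmk_eq_vmk_iff.mp ha
    obtain ⟨b, p, hb, hp⟩ := ih (vmk_smul hn v)
    refine ⟨b, .cons ((hact n u v).mp huv) p, hb, ?_⟩
    simp only [Walk.edges_cons, List.map_cons, Sym2.map_mk, vmk_smul hn, hp]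
    rfl

@[simps]
def quotientHom (hloop : ∀ u v : V, T.Adj u v → vmk N u ≠ vmk N v) :
    T →g quotientGraph T N where
  toFun := vmk N
  map_rel' {u v} huv := ⟨hloop u v huv, u, v, rfl, rfl, huv⟩

theorem quotientGraph_isAcyclic (hT : T.IsTree) (hact : IsGraphAction G T)
    (hgen : N ≤ ⨆ v : V, N ⊓ stabilizer G v) : (quotientGraph T N).IsAcyclic := by
  classical
  refine isAcyclic_iff_forall_adj_isBridge.mpr fun α β hαβ => ?_
  obtain ⟨-, u, v, rfl, rfl, huv⟩ := hαβ
  refine isBridge_iff_forall_walk_mem_edges.mpr fun c => ?_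
  obtain ⟨b, p, hb, hp⟩ := exists_walk_lift hact c rfl
  have heven := even_countP_edges_of_vmk_eq hT hact hgen (edgeOrbit N s(u, v))
    (fun _ hg => map_mem_edgeOrbit_iff hg) (.cons huv.symm p) hb.symm
  have hpos : 0 < p.edges.countP (· ∈ edgeOrbit N s(u, v)) := Nat.pos_of_ne_zero fun h0 => by
    simp [h0, Sym2.eq_swap, self_mem_edgeOrbit] at heven
  obtain ⟨e, he, heo⟩ := List.countP_pos_iff.mp hpos
  rw [← hp, ← Sym2.map_mk, ← map_vmk_of_mem_edgeOrbit (of_decide_eq_true heo)]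
  exact List.mem_map_of_mem he

theorem quotIsTree_of_le_iSup_inf_stabilizer (hT : T.IsTree) (hact : IsGraphAction G T)
    (hgen : N ≤ ⨆ v : V, N ⊓ stabilizer G v) : QuotIsTree T N := by
  have hloop : ∀ u v : V, T.Adj u v → vmk N u ≠ vmk N v :=
    fun _ _ => vmk_ne_vmk_of_adj hT hact hgen
  refine ⟨⟨hT.connected.map (quotientHom hloop) Quotient.mk_surjective,
    quotientGraph_isAcyclic hT hact hgen⟩, hloop,
    fun _ _ _ _ => exists_mem_smul_eq_smul_eq_of_adj hT hact hgen⟩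

theorem QuotIsTree.exists_mem_iSup_inf_stabilizer_smul_eq (h : QuotIsTree T N)
    (hact : IsGraphAction G T) {a b : V} (p : T.Walk a b) (hab : vmk N a = vmk N b) :
    ∃ s ∈ ⨆ v : V, N ⊓ stabilizer G v, s • a = b := by
  induction hn : p.length using Nat.strong_induction_on generalizing b with
  | _ n ih =>
  by_cases hnil : p.Nil
  · exact ⟨1, one_mem _, by rw [one_smul, hnil.eq]⟩
  obtain ⟨hQ, hloop, hlift⟩ := h
  -- the image of `p` backtracks in `T/N`; fold `p` there by an element of `N` fixing the turn
  have hnp : ¬((p.map (quotientHom hloop)).copy rfl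
      (show quotientHom hloop b = quotientHom hloop a from hab.symm)).IsPath := fun hpath =>
    hnil (by simpa [Walk.nil_map_iff] using Walk.isPath_iff_nil.mp hpath)
  obtain ⟨i, hi, hback⟩ := hQ.isAcyclic.exists_getVert_eq_getVert_add_two hnp
  simp only [Walk.getVert_copy, Walk.getVert_map, Walk.length_copy, Walk.length_map,
    quotientHom_apply] at hi hback
  obtain ⟨m, hm, hmz, hmy⟩ := hlift _ _ _ _ (p.adj_getVert_succ (by omega)).symm
    (p.adj_getVert_succ (by omega)) hback.symm rfl
  have hmS : m ∈ ⨆ v : V, N ⊓ stabilizer G v := Subgroup.mem_iSup_of_mem _ ⟨hm, hmy⟩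
  let q : T.Walk a (m • b) :=
    (p.take i).append (((p.drop (i + 2)).map (hact.hom m)).copy
      (show hact.hom m (p.getVert (i + 2)) = p.getVert i from hmz) (hact.hom_apply m b))
  have hq : q.length < n := by
    simp only [q, Walk.length_append, Walk.take_length, Walk.length_copy, Walk.length_map,
      Walk.drop_length]
    omega
  obtain ⟨s, hs, hsa⟩ := ih q.length hq q (hab.trans (vmk_smul hm b).symm) rfl
  exact ⟨m⁻¹ * s, mul_mem (inv_mem hmS) hs, by rw [mul_smul, hsa, inv_smul_smul]⟩

theorem QuotIsTree.le_iSup_inf_stabilizer (h : QuotIsTree T N) (hT : T.Connected)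
    (hact : IsGraphAction G T) : N ≤ ⨆ v : V, N ⊓ stabilizer G v := by
  intro n hn
  obtain ⟨v⟩ := hT.nonempty
  obtain ⟨p⟩ := hT.preconnected v (n • v)
  obtain ⟨s, hs, hsv⟩ := h.exists_mem_iSup_inf_stabilizer_smul_eq hact p (vmk_smul hn v).symm
  have hsN : s ∈ N := (iSup_le fun _ => inf_le_left : ⨆ v : V, N ⊓ stabilizer G v ≤ N) hs
  have hfix : s⁻¹ * n ∈ N ⊓ stabilizer G v := Subgroup.mem_inf.mpr
    ⟨mul_mem (inv_mem hsN) hn, by rw [mem_stabilizer_iff, mul_smul, ← hsv, inv_smul_smul]⟩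
  simpa using mul_mem hs (Subgroup.mem_iSup_of_mem v hfix)

def stabilizerFamily (N : Subgroup G) (hN : N.Normal) : EquivariantFamily G V where
  R v := N ⊓ stabilizer G v
  le_stab _ := inf_le_right
  equivariant g v x hx := ⟨hN.conj_mem x hx.1 g, mem_stabilizer_iff.mpr <| by
    rw [mul_smul, mul_smul, inv_smul_smul, mem_stabilizer_iff.mp hx.2]⟩

theorem EquivariantFamily.le_iSup_inf_stabilizer (fam : EquivariantFamily G V)
    (h : N = ⨆ v : V, fam.R v) : N ≤ ⨆ v : V, N ⊓ stabilizer G v :=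
  h.le.trans (iSup_mono fun v => le_inf ((le_iSup fam.R v).trans h.ge) (fam.le_stab v))

end QuotientTree

theorem quotient_graph_is_tree_iff_generated_by_equivariant_family_general
    {V G : Type*} [Group G] [MulAction G V] (T : SimpleGraph V)
    (htree : T.IsTree) (hact : IsGraphAction G T)
    (N : Subgroup G) (hN : N.Normal) :
    QuotIsTree T N ↔ ∃ fam : EquivariantFamily G V, N = ⨆ v : V, fam.R v := by
  constructor
  · intro h
    exact ⟨stabilizerFamily N hN, le_antisymm (h.le_iSup_inf_stabilizer htree.connected hact)
      (iSup_le fun _ => inf_le_left)⟩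
  · rintro ⟨fam, hfam⟩
    exact quotIsTree_of_le_iSup_inf_stabilizer htree hact (fam.le_iSup_inf_stabilizer hfam)

/-- Proposition: quotients of trees.
Let `G` be a group acting without edge inversions on a simplicial tree `T`, and let `N` be
a normal subgroup of `G`.  The quotient graph `T/N` is a tree if and only if `N` is
generated by an equivariant family of subgroups `{R_v}` of `G`, i.e. `N = ⟨R_v⟩`. -/
theorem quotient_graph_is_tree_iff_generated_by_equivariant_family
    {V G : Type*} [Group G] [MulAction G V] (T : SimpleGraph V)
    (htree : T.IsTree) (hact : IsGraphAction G T) (hinv : NoEdgeInversions G T)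
    (N : Subgroup G) (hN : N.Normal) :
    QuotIsTree T N ↔ ∃ fam : EquivariantFamily G V, N = ⨆ v : V, fam.R v :=
  quotient_graph_is_tree_iff_generated_by_equivariant_family_general T htree hact N hN
end

section
/- Let (Γ,𝒢) be a finite graph of groups with Bass-Serre tree T and G = π₁(Γ,𝒢). Let Γ̃ be a lift of Γ in T (a fundamental domain), D = diam(Γ̃), and ṽ₀ a base vertex of Γ̃. Then the generating set X = {g ∈ G : d_T(ṽ₀, gṽ₀) ≤ 2D+1} of G and the standard generating set Y = (⊔_{v∈V(Γ)} G_v) ⊔ {stable letters of Γ} are equivalent, i.e. sup_{y∈Y} |y|_X < ∞ and sup_{x∈X} |x|_Y < ∞ (indeed every x ∈ X has Y-word length at most 4D+3). -/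
open SimpleGraph

section MetricPrelude

variable {G : Type*}

/-- Word length of `g` with respect to the (symmetrized) subset `X`. -/
noncomputable def wordLength [Group G] (X : Set G) (g : G) : ℕ :=
  sInf {n : ℕ | ∃ l : List G, (∀ a ∈ l, a ∈ X ∨ a⁻¹ ∈ X) ∧ l.prod = g ∧ l.length = n}

/-- `X ⪯ Y`: the generating set `X` is dominated by `Y`,
i.e. `sup_{y ∈ Y} |y|_X < ∞`. -/
def GenSetDominatedBy [Group G] (X Y : Set G) : Prop :=
  ∃ M : ℕ, ∀ y ∈ Y, wordLength X y ≤ M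

/-- Distance in the Cayley graph of `G` with respect to `X`. -/
noncomputable def cayDist [Group G] (X : Set G) (g h : G) : ℕ := wordLength X (g⁻¹ * h)

/-- Gromov's four point condition for an (ℕ-valued) metric. -/
def FourPointHyp {α : Type*} (d : α → α → ℕ) : Prop :=
  ∃ δ : ℕ, ∀ a b c e : α,
    d a b + d c e ≤ max (d a c + d b e) (d a e + d b c) + δ

/-- The equivalence class of the generating set `X` belongs to `𝒜𝓗(G)`:
`X` generates `G`, the Cayley graph `Γ(G,X)` is hyperbolic, and the natural action of
`G` on it is acylindrical. -/
noncomputable def InAH [Group G] (X : Set G) : Prop :=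
  Subgroup.closure X = ⊤ ∧
  FourPointHyp (cayDist X) ∧
  (∀ ε : ℕ, ∃ R C : ℕ, 0 < R ∧ 0 < C ∧ ∀ x y : G, R ≤ cayDist X x y →
    {g : G | cayDist X x (g * x) ≤ ε ∧ cayDist X y (g * y) ≤ ε}.Finite ∧
    Nat.card {g : G | cayDist X x (g * x) ≤ ε ∧ cayDist X y (g * y) ≤ ε} ≤ C)

/-- `[Y]` is the largest element of `𝒜𝓗(G)`. -/
noncomputable def IsLargestAH [Group G] (Y : Set G) : Prop :=
  InAH Y ∧ ∀ X : Set G, InAH X → GenSetDominatedBy X Y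

/-- The action of `G` on `S` is by isometries. -/
def IsometricAction (G S : Type*) [Group G] [PseudoMetricSpace S] [MulAction G S] : Prop :=
  ∀ (g : G) (x y : S), dist (g • x) (g • y) = dist x y

/-- Acylindricity of an action on a metric space. -/
def AcylMetric (G S : Type*) [Group G] [PseudoMetricSpace S] [MulAction G S] : Prop :=
  ∀ ε : ℝ, 0 < ε → ∃ R N : ℝ, 0 < R ∧ 0 < N ∧ ∀ x y : S, R ≤ dist x y →
    {g : G | dist x (g • x) ≤ ε ∧ dist y (g • y) ≤ ε}.Finite ∧
    (Nat.card {g : G | dist x (g • x) ≤ ε ∧ dist y (g • y) ≤ ε} : ℝ) ≤ N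

/-- A `δ`-hyperbolic metric space (four point condition). -/
def GromovHyp (S : Type*) [PseudoMetricSpace S] : Prop :=
  ∃ δ : ℝ, 0 ≤ δ ∧ ∀ x y z w : S,
    dist x y + dist z w ≤ max (dist x z + dist y w) (dist x w + dist y z) + 2 * δ

/-- A virtually cyclic group. -/
def VirtuallyCyclic (G : Type*) [Group G] : Prop :=
  ∃ H : Subgroup G, H.FiniteIndex ∧ IsCyclic H

/-- A group is acylindrically hyperbolic if it admits a non-elementary acylindrical
isometric action on a hyperbolic metric space.  By Osin's classification, for an
acylindrical action non-elementarity is equivalent to: orbits are unbounded and the group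
is not virtually cyclic. -/
def AcylindricallyHyperbolic (G : Type*) [Group G] : Prop :=
  ∃ (S : Type) (_ : MetricSpace S) (_ : MulAction G S),
    IsometricAction G S ∧ GromovHyp S ∧ AcylMetric G S ∧
    (∀ s : S, ¬ Bornology.IsBounded (MulAction.orbit G s)) ∧ ¬ VirtuallyCyclic G

end MetricPrelude

/-!
Every edge of the Bass–Serre tree `T` is a translate of an edge from the fundamental domain `S`
to `S` itself or to `y • S` with `y` a standard generator: the translates of these edges form a
`G`-invariant subgraph which is connected because `S` is connected and `Y` generates `G`, and a
connected spanning subgraph of a tree is the whole tree. Hence a neighbour of `S` lies in `h • S`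
for some `h` of `Y`-length at most `2`, and following a geodesic of length at most `2D + 1` from
`x • ṽ₀` back to `ṽ₀` writes `x` as a product of at most `2D + 1` such elements `h` followed by
one element of the stabilizer of `ṽ₀`. Conversely each standard generator moves `ṽ₀` by at most
`2D + 1`, so it already lies in `X`.
-/

open scoped Pointwise
open MulAction

section GraphAction

variable {G V : Type*} [Group G] [MulAction G V] {T : SimpleGraph V}

def IsGraphAction.toHom (hact : IsGraphAction G T) (g : G) : T →g T where
  toFun := (g • ·)
  map_rel' := (hact g _ _).mp

theorem IsGraphAction.reachable_smul (hact : IsGraphAction G T) (g : G) {a b : V}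
    (h : T.Reachable a b) : T.Reachable (g • a) (g • b) :=
  h.map (hact.toHom g)

theorem IsGraphAction.dist_smul (hact : IsGraphAction G T) (hconn : T.Connected) (g : G)
    (a b : V) : T.dist (g • a) (g • b) = T.dist a b := by
  have dist_smul_le : ∀ (g : G) (a b : V), T.dist (g • a) (g • b) ≤ T.dist a b := by
    intro g a b
    obtain ⟨p, hp⟩ := hconn.exists_walk_length_eq_dist a b
    calc T.dist (g • a) (g • b) ≤ (p.map (hact.toHom g)).length := SimpleGraph.dist_le _
      _ = T.dist a b := by simp [hp]
  refine (dist_smul_le g a b).antisymm ?_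
  simpa using dist_smul_le g⁻¹ (g • a) (g • b)

theorem IsGraphAction.connected_of_reachable_smul (hact : IsGraphAction G T) {Y : Set G}
    (hYgen : Subgroup.closure Y = ⊤) {S : Set V} (hfd : ∀ v : V, ∃ g : G, ∃ u ∈ S, g • u = v)
    {v0 : V} (hS : ∀ u ∈ S, T.Reachable v0 u) (hY : ∀ y ∈ Y, T.Reachable v0 (y • v0)) :
    T.Connected := by
  have horbit : ∀ g : G, T.Reachable v0 (g • v0) := by
    intro g
    induction (hYgen ▸ Subgroup.mem_top g : g ∈ Subgroup.closure Y)
      using Subgroup.closure_induction_left with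
    | one => simp
    | mul_left y hy g _ ih => simpa [mul_smul] using (hY y hy).trans (hact.reachable_smul y ih)
    | inv_mul_cancel y hy g _ ih =>
      have hy' : T.Reachable v0 (y⁻¹ • v0) := by
        simpa using (hact.reachable_smul y⁻¹ (hY y hy)).symm
      simpa [mul_smul] using hy'.trans (hact.reachable_smul y⁻¹ ih)
  have hbase : ∀ v : V, T.Reachable v0 v := by
    intro v
    obtain ⟨g, u, hu, rfl⟩ := hfd v
    exact (horbit g).trans (hact.reachable_smul g (hS u hu))
  have : Nonempty V := ⟨v0⟩
  exact ⟨fun a b => (hbase a).symm.trans (hbase b)⟩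

end GraphAction

section WordBall

variable {G : Type*} [Group G] {Y : Set G} {g h : G} {m n : ℕ}

/-- Balls rather than `wordLength` itself, since `wordLength` is subadditive only on the
subgroup generated by `Y` (it takes the junk value `0` outside it). -/
def wordBall (Y : Set G) (n : ℕ) : Set G :=
  {g | ∃ l : List G, (∀ a ∈ l, a ∈ Y ∨ a⁻¹ ∈ Y) ∧ l.prod = g ∧ l.length ≤ n}

theorem mem_wordBall :
    g ∈ wordBall Y n ↔ ∃ l : List G, (∀ a ∈ l, a ∈ Y ∨ a⁻¹ ∈ Y) ∧ l.prod = g ∧ l.length ≤ n :=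
  Iff.rfl

theorem wordLength_le_of_mem_wordBall (hg : g ∈ wordBall Y n) : wordLength Y g ≤ n := by
  obtain ⟨l, hl, hprod, hlen⟩ := hg
  calc wordLength Y g ≤ l.length := Nat.sInf_le ⟨l, hl, hprod, rfl⟩
    _ ≤ n := hlen

theorem mem_wordBall_one_of_mem (hg : g ∈ Y) : g ∈ wordBall Y 1 :=
  mem_wordBall.mpr ⟨[g], by simpa using Or.inl hg, by simp, by simp⟩

theorem wordLength_le_one_of_mem (hg : g ∈ Y) : wordLength Y g ≤ 1 :=
  wordLength_le_of_mem_wordBall (mem_wordBall_one_of_mem hg)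

theorem one_mem_wordBall : (1 : G) ∈ wordBall Y n :=
  mem_wordBall.mpr ⟨[], by simp, by simp, by simp⟩

theorem wordBall_mono (hmn : m ≤ n) : wordBall Y m ⊆ wordBall Y n :=
  fun _ ⟨l, hl, hprod, hlen⟩ => mem_wordBall.mpr ⟨l, hl, hprod, hlen.trans hmn⟩

theorem inv_mem_wordBall (hg : g ∈ wordBall Y n) : g⁻¹ ∈ wordBall Y n := by
  obtain ⟨l, hl, rfl, hlen⟩ := hg
  refine mem_wordBall.mpr
    ⟨(l.map (·⁻¹)).reverse, ?_, (List.prod_inv_reverse l).symm, by simpa using hlen⟩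
  simp only [List.mem_reverse, List.mem_map]
  rintro _ ⟨a, ha, rfl⟩
  simpa [or_comm] using hl a ha

theorem mul_mem_wordBall (hg : g ∈ wordBall Y m) (hh : h ∈ wordBall Y n) :
    g * h ∈ wordBall Y (m + n) := by
  obtain ⟨l, hl, rfl, hlen⟩ := hg
  obtain ⟨l', hl', rfl, hlen'⟩ := hh
  refine mem_wordBall.mpr ⟨l ++ l', ?_, List.prod_append, by simpa using Nat.add_le_add hlen hlen'⟩
  intro a ha
  rcases List.mem_append.mp ha with ha | ha
  exacts [hl a ha, hl' a ha]

end WordBall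

section FundamentalDomain

variable {G V : Type*} [Group G] [MulAction G V] {T : SimpleGraph V} {S : Set V} {Y : Set G}
  {g h : G} {u v w v0 : V}

def coveredGraph (T : SimpleGraph V) (S : Set V) (Y : Set G) : SimpleGraph V where
  Adj a b := T.Adj a b ∧ ∃ g : G, ∃ y ∈ wordBall Y 1, a ∈ g • S ∧ b ∈ (g * y) • S
  symm := ⟨fun _ _ ⟨hab, g, y, hy, ha, hb⟩ =>
    ⟨hab.symm, g * y, y⁻¹, inv_mem_wordBall hy, hb, by simpa using ha⟩⟩
  loopless := ⟨fun a h => T.loopless.irrefl a h.1⟩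

theorem coveredGraph_le : coveredGraph T S Y ≤ T :=
  fun _ _ h => h.1

theorem isGraphAction_coveredGraph (hact : IsGraphAction G T) :
    IsGraphAction G (coveredGraph T S Y) := by
  have adj_smul : ∀ (g : G) (a b : V), (coveredGraph T S Y).Adj a b →
      (coveredGraph T S Y).Adj (g • a) (g • b) := by
    rintro g a b ⟨hab, g', y, hy, ha, hb⟩
    refine ⟨(hact g a b).mp hab, g * g', y, hy, ?_, ?_⟩
    · simpa [mul_smul] using Set.smul_mem_smul_set (a := g) ha
    · simpa [mul_assoc, mul_smul] using Set.smul_mem_smul_set (a := g) hb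
  exact fun g a b => ⟨adj_smul g a b, fun h => by simpa using adj_smul g⁻¹ _ _ h⟩

theorem coveredGraph_adj_of_adj_smul (hy : g ∈ wordBall Y 1) (hu : u ∈ S) (hw : w ∈ S)
    (hadj : T.Adj u (g • w)) : (coveredGraph T S Y).Adj u (g • w) :=
  ⟨hadj, 1, g, hy, by simpa using hu, by simpa using Set.smul_mem_smul_set (a := g) hw⟩

theorem coveredGraph_reachable_of_mem (hSconn : (T.induce S).Connected) (hu : u ∈ S)
    (hv : v ∈ S) : (coveredGraph T S Y).Reachable u v := by
  let incl : T.induce S →g coveredGraph T S Y :=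
    ⟨Subtype.val, fun {a b} hab => by
      simpa using coveredGraph_adj_of_adj_smul (g := 1) one_mem_wordBall a.2 b.2
        (by simpa using hab)⟩
  exact (hSconn ⟨u, hu⟩ ⟨v, hv⟩).map incl

theorem coveredGraph_eq (htree : T.IsTree) (hact : IsGraphAction G T)
    (hYgen : Subgroup.closure Y = ⊤) (hfd : ∀ v : V, ∃ g : G, ∃ u ∈ S, g • u = v)
    (hSconn : (T.induce S).Connected) (hv0 : v0 ∈ S)
    (hY : ∀ y ∈ Y, (coveredGraph T S Y).Reachable v0 (y • v0)) :
    coveredGraph T S Y = T := by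
  have hconn : (coveredGraph T S Y).Connected :=
    (isGraphAction_coveredGraph hact).connected_of_reachable_smul hYgen hfd
      (fun _ hu => coveredGraph_reachable_of_mem hSconn hv0 hu) hY
  exact coveredGraph_le.antisymm
    ((SimpleGraph.isTree_iff_minimal_connected.mp htree).2 hconn coveredGraph_le)

theorem coveredGraph_reachable_smul_of_mem_stabilizer (hact : IsGraphAction G T)
    (hSconn : (T.induce S).Connected) (hv0 : v0 ∈ S) (hu : u ∈ S) (hg : g ∈ stabilizer G u) :
    (coveredGraph T S Y).Reachable v0 (g • v0) := by
  have := (isGraphAction_coveredGraph hact).reachable_smul g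
    (coveredGraph_reachable_of_mem (Y := Y) hSconn hu hv0)
  rw [mem_stabilizer_iff.mp hg] at this
  exact (coveredGraph_reachable_of_mem hSconn hv0 hu).trans this

theorem coveredGraph_reachable_smul_of_adj_smul (hact : IsGraphAction G T)
    (hSconn : (T.induce S).Connected) (hv0 : v0 ∈ S) (hg : g ∈ wordBall Y 1) (hu : u ∈ S)
    (hw : w ∈ S) (hadj : T.Adj u (g • w)) : (coveredGraph T S Y).Reachable v0 (g • v0) :=
  (coveredGraph_reachable_of_mem hSconn hv0 hu).trans <|
    (coveredGraph_adj_of_adj_smul hg hu hw hadj).reachable.trans <|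
      (isGraphAction_coveredGraph hact).reachable_smul g
        (coveredGraph_reachable_of_mem hSconn hw hv0)

theorem dist_smul_le_of_mem_stabilizer (hact : IsGraphAction G T) (hconn : T.Connected) {D : ℕ}
    (hD : ∀ u ∈ S, ∀ u' ∈ S, T.dist u u' ≤ D) (hv0 : v0 ∈ S) (hu : u ∈ S)
    (hg : g ∈ stabilizer G u) : T.dist v0 (g • v0) ≤ 2 * D := by
  have hmoved : T.dist u (g • v0) = T.dist u v0 := by
    simpa [mem_stabilizer_iff.mp hg] using hact.dist_smul hconn g u v0
  calc T.dist v0 (g • v0) ≤ T.dist v0 u + T.dist u (g • v0) := hconn.dist_triangle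
    _ = T.dist v0 u + T.dist u v0 := by rw [hmoved]
    _ ≤ 2 * D := by linarith [hD v0 hv0 u hu, hD u hu v0 hv0]

theorem dist_smul_le_of_adj_smul (hact : IsGraphAction G T) (hconn : T.Connected) {D : ℕ}
    (hD : ∀ u ∈ S, ∀ u' ∈ S, T.dist u u' ≤ D) (hv0 : v0 ∈ S) (hu : u ∈ S) (hw : w ∈ S)
    (hadj : T.Adj u (g • w)) : T.dist v0 (g • v0) ≤ 2 * D + 1 := by
  calc T.dist v0 (g • v0) ≤ T.dist v0 u + (T.dist u (g • w) + T.dist (g • w) (g • v0)) :=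
        hconn.dist_triangle.trans (Nat.add_le_add_left hconn.dist_triangle _)
    _ = T.dist v0 u + (1 + T.dist w v0) := by
        rw [SimpleGraph.dist_eq_one_iff_adj.mpr hadj, hact.dist_smul hconn]
    _ ≤ 2 * D + 1 := by linarith [hD v0 hv0 u hu, hD w hw v0 hv0]

theorem exists_mem_wordBall_of_walk (hact : IsGraphAction G T) {k : ℕ}
    (hcross : ∀ u ∈ S, ∀ w, T.Adj u w → ∃ h ∈ wordBall Y k, w ∈ h • S) {x : V} (hx : x ∈ S)
    (p : T.Walk v x) : ∃ h ∈ wordBall Y (k * p.length), v ∈ h • S := by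
  induction p with
  | nil => exact ⟨1, one_mem_wordBall, by simpa using hx⟩
  | @cons v w x hvw q ih =>
    obtain ⟨h, hh, s, hs, rfl⟩ := ih hx
    obtain ⟨h', hh', hv⟩ := hcross s hs (h⁻¹ • v) (by simpa using ((hact h⁻¹ _ _).mp hvw).symm)
    refine ⟨h * h', wordBall_mono (mul_add_one k q.length).ge (mul_mem_wordBall hh hh'), ?_⟩
    simpa [mul_smul, Set.mem_smul_set_iff_inv_smul_mem] using hv

variable (hstab : ∀ u ∈ S, (stabilizer G u : Set G) ⊆ Y)
  (htrans : ∀ u ∈ S, ∀ u' ∈ S, (∃ g : G, g • u = u') → u = u')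
include hstab htrans

theorem mem_wordBall_one_of_mem_smul_set (hu : u ∈ S) (hg : u ∈ g • S) : g ∈ wordBall Y 1 := by
  obtain ⟨s, hs, hgs⟩ := hg
  obtain rfl : s = u := htrans s hs u hu ⟨g, hgs⟩
  exact mem_wordBall_one_of_mem (hstab s hs hgs)

theorem exists_mem_wordBall_two_of_adj (hu : u ∈ S) (hadj : (coveredGraph T S Y).Adj u w) :
    ∃ h ∈ wordBall Y 2, w ∈ h • S := by
  obtain ⟨-, g, y, hy, hug, hw⟩ := hadj
  exact ⟨g * y, mul_mem_wordBall (mem_wordBall_one_of_mem_smul_set hstab htrans hu hug) hy, hw⟩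

theorem mem_wordBall_succ_of_smul_mem_smul_set (hv0 : v0 ∈ S) (hh : h ∈ wordBall Y n)
    (hg : g • v0 ∈ h • S) : g ∈ wordBall Y (n + 1) := by
  have hv0' : v0 ∈ (g⁻¹ * h) • S := by simpa [mul_smul, Set.mem_smul_set_iff_inv_smul_mem] using hg
  simpa using mul_mem_wordBall hh
    (inv_mem_wordBall (mem_wordBall_one_of_mem_smul_set hstab htrans hv0 hv0'))

end FundamentalDomain

theorem generating_sets_equivalent_for_finite_graph_of_groups_general
    {V G : Type*} [Group G] [MulAction G V] (T : SimpleGraph V)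
    (htree : T.IsTree) (hact : IsGraphAction G T)
    -- `S` is (the vertex set of) a lift `Γ̃` of the finite graph `Γ` in `T`,
    -- i.e. a finite subtree which is a fundamental domain for the action
    (S : Set V) (hSconn : (T.induce S).Connected)
    (hfd : ∀ v : V, ∃ g : G, ∃ u ∈ S, g • u = v)
    (htrans : ∀ u ∈ S, ∀ u' ∈ S, (∃ g : G, g • u = u') → u = u')
    -- `D` is the diameter of `Γ̃` and `ṽ₀` a base vertex
    (D : ℕ) (hDub : ∀ u ∈ S, ∀ u' ∈ S, T.dist u u' ≤ D)
    (v0 : V) (hv0 : v0 ∈ S)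
    -- `F` is the set of stable letters, and `Y` the standard generating set
    (F : Set G) (hF : ∀ f ∈ F, ∃ u ∈ S, ∃ w ∈ S, T.Adj u (f • w))
    (Y : Set G) (hY : Y = (⋃ u ∈ S, (MulAction.stabilizer G u : Set G)) ∪ F)
    (hYgen : Subgroup.closure Y = ⊤)
    (X : Set G) (hX : X = {g : G | T.dist v0 (g • v0) ≤ 2 * D + 1}) :
    GenSetDominatedBy X Y ∧ (∀ x ∈ X, wordLength Y x ≤ 4 * D + 3) := by
  have hconn := htree.connected
  have hstab : ∀ u ∈ S, (stabilizer G u : Set G) ⊆ Y :=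
    fun u hu g hg => hY ▸ Or.inl (Set.mem_biUnion hu hg)
  have hgen : ∀ y ∈ Y, (∃ u ∈ S, y ∈ stabilizer G u) ∨ ∃ u ∈ S, ∃ w ∈ S, T.Adj u (y • w) := by
    rw [hY]
    rintro y (hy | hy)
    exacts [Or.inl (by simpa using hy), Or.inr (hF y hy)]
  subst hX
  refine ⟨⟨1, fun y hy => wordLength_le_one_of_mem ?_⟩, fun x hx => ?_⟩
  · rcases hgen y hy with ⟨u, hu, hyu⟩ | ⟨u, hu, w, hw, hadj⟩
    · exact (dist_smul_le_of_mem_stabilizer hact hconn hDub hv0 hu hyu).trans (by omega)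
    · exact dist_smul_le_of_adj_smul hact hconn hDub hv0 hu hw hadj
  have hcov : coveredGraph T S Y = T := by
    refine coveredGraph_eq htree hact hYgen hfd hSconn hv0 fun y hy => ?_
    rcases hgen y hy with ⟨u, hu, hyu⟩ | ⟨u, hu, w, hw, hadj⟩
    · exact coveredGraph_reachable_smul_of_mem_stabilizer hact hSconn hv0 hu hyu
    · exact coveredGraph_reachable_smul_of_adj_smul hact hSconn hv0
        (mem_wordBall_one_of_mem hy) hu hw hadj
  obtain ⟨p, hp⟩ := hconn.exists_walk_length_eq_dist (x • v0) v0
  obtain ⟨h, hh, hxh⟩ := exists_mem_wordBall_of_walk hact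
    (fun u hu w huw => exists_mem_wordBall_two_of_adj hstab htrans hu (hcov ▸ huw)) hv0 p
  have hlen : 2 * p.length ≤ 4 * D + 2 := by
    rw [hp, SimpleGraph.dist_comm]
    exact (Nat.mul_le_mul_left 2 hx).trans_eq (by ring)
  exact wordLength_le_of_mem_wordBall
    (mem_wordBall_succ_of_smul_mem_smul_set hstab htrans hv0 (wordBall_mono hlen hh) hxh)

/-- Lemma: the two generating sets are equivalent.
Let `(Γ,𝒢)` be a finite graph of groups with Bass–Serre tree `T` and `G = π₁(Γ,𝒢)`;
let `Γ̃` be a lift of `Γ` in `T` (a finite-subtree fundamental domain) of diameter `D`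
with base vertex `ṽ₀`.  Then the generating set
`X = {g ∈ G : d_T(ṽ₀, g ṽ₀) ≤ 2D+1}` and the standard generating set
`Y = (⊔_v G_v) ⊔ {stable letters}` are equivalent: `sup_{y ∈ Y} |y|_X < ∞` and every
`x ∈ X` has `Y`-word length at most `4D+3`. -/
theorem generating_sets_equivalent_for_finite_graph_of_groups
    {V G : Type*} [Group G] [MulAction G V] (T : SimpleGraph V)
    (htree : T.IsTree) (hact : IsGraphAction G T) (hinv : NoEdgeInversions G T)
    -- `S` is (the vertex set of) a lift `Γ̃` of the finite graph `Γ` in `T`,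
    -- i.e. a finite subtree which is a fundamental domain for the action
    (S : Set V) (hSfin : S.Finite) (hSconn : (T.induce S).Connected)
    (hfd : ∀ v : V, ∃ g : G, ∃ u ∈ S, g • u = v)
    (htrans : ∀ u ∈ S, ∀ u' ∈ S, (∃ g : G, g • u = u') → u = u')
    -- `D` is the diameter of `Γ̃` and `ṽ₀` a base vertex
    (D : ℕ) (hDub : ∀ u ∈ S, ∀ u' ∈ S, T.dist u u' ≤ D)
    (hDattained : ∃ u ∈ S, ∃ u' ∈ S, T.dist u u' = D)
    (v0 : V) (hv0 : v0 ∈ S)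
    -- `F` is the set of stable letters, and `Y` the standard generating set
    (F : Set G) (hF : ∀ f ∈ F, ∃ u ∈ S, ∃ w ∈ S, T.Adj u (f • w))
    (Y : Set G) (hY : Y = (⋃ u ∈ S, (MulAction.stabilizer G u : Set G)) ∪ F)
    (hYgen : Subgroup.closure Y = ⊤)
    (X : Set G) (hX : X = {g : G | T.dist v0 (g • v0) ≤ 2 * D + 1}) :
    GenSetDominatedBy X Y ∧ (∀ x ∈ X, wordLength Y x ≤ 4 * D + 3) :=
  generating_sets_equivalent_for_finite_graph_of_groups_general T htree hact S hSconn hfd htrans D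
    hDub v0 hv0 F hF Y hY hYgen X hX
end
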